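/- arXiv:1708.04507 — 3 statements merged into one kernel-verified Lean document; each statement's English description precedes it below -/
import Mathlib

section
/- For all positive integers n, r and s: Σ_{d | r} c_{d,s}(n) · c_{r,s}((r/d)^s) equals r^s if (n, r^s)_s = 1 and equals 0 otherwise. -/
open Finset

/-- The generalized gcd `(a,b)_s`: the largest `s`-th power dividing both `a` and `b`. -/
noncomputable def ggcd (s a b : ℕ) : ℕ :=
  sSup {m : ℕ | (∃ l : ℕ, m = l ^ s) ∧ m ∣ a ∧ m ∣ b}

/-- The generalized Ramanujan sum `c_{r,s}(n)`. -/
noncomputable def crs (s r n : ℕ) : ℂ :=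
  ∑ j ∈ Finset.Icc 1 (r ^ s),
    if ggcd s j (r ^ s) = 1 then Complex.exp (2 * Real.pi * Complex.I * n * j / (r ^ s)) else 0

/-- The discrete Fourier transform of an `r^s`-periodic function. -/
noncomputable def dft (s r : ℕ) (f : ℕ → ℂ) (n : ℕ) : ℂ :=
  ∑ k ∈ Finset.Icc 1 (r ^ s), f k * Complex.exp (-(2 * Real.pi * Complex.I * k * n / (r ^ s)))

/-- A function is `(r,s)`-even if `f(n) = f((n, r^s)_s)` for all `n`. -/
def IsRSEven (s r : ℕ) (f : ℕ → ℂ) : Prop := ∀ n, f n = f (ggcd s n (r ^ s))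

/-
The indicator of `(j, r^s)_s = 1` is `∑ μ(e)` over the `e ∣ r` with `e^s ∣ j`: these `e` are
closed under `lcm` and under divisors, so they are exactly the divisors of one number `m`, and
`(j, r^s)_s = m^s`. Substituting this into `c_{r,s}(n)` and summing the geometric series gives
`c_{r,s}(n) = ∑_{d ∣ r, d^s ∣ n} μ(r/d) d^s`, so by Möbius inversion `∑_{d ∣ m} c_{d,s}(n)` is
`m^s` if `m^s ∣ n` and `0` otherwise. In the sum of the theorem, expand `c_{r,s}((r/d)^s)` in the
same way and exchange the two sums: what is left is `r^s ∑_{t ∣ r, t^s ∣ n} μ(t)`.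
-/

open ArithmeticFunction
open scoped ArithmeticFunction.Moebius

lemma exists_filter_pow_dvd_eq_divisors {r : ℕ} (hr : r ≠ 0) (s j : ℕ) :
    ∃ m : ℕ, {e ∈ r.divisors | e ^ s ∣ j} = m.divisors := by
  set S := {e ∈ r.divisors | e ^ s ∣ j}
  have hS : ∀ e, e ∈ S ↔ e ∣ r ∧ e ^ s ∣ j := by simp [S, hr]
  have hne : S.Nonempty := ⟨1, (hS 1).2 ⟨one_dvd r, by simp⟩⟩
  obtain ⟨hmr, hmj⟩ := (hS _).1 (S.max'_mem hne)
  set m := S.max' hne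
  have hm : m ≠ 0 := ne_zero_of_dvd_ne_zero hr hmr
  refine ⟨m, Finset.ext fun t => ?_⟩
  rw [hS, Nat.mem_divisors]
  constructor
  · rintro ⟨htr, htj⟩
    -- `S` is closed under `lcm`, so its largest element is a multiple of all the others
    have hlcm : Nat.lcm t m ∈ S :=
      (hS _).2 ⟨Nat.lcm_dvd htr hmr, Nat.pow_lcm_pow ▸ Nat.lcm_dvd htj hmj⟩
    have hlcm_eq : Nat.lcm t m = m := le_antisymm (S.le_max' _ hlcm)
      (Nat.le_of_dvd (Nat.pos_of_ne_zero (Nat.lcm_ne_zero (ne_zero_of_dvd_ne_zero hr htr) hm))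
        (Nat.dvd_lcm_right t m))
    exact ⟨hlcm_eq ▸ Nat.dvd_lcm_left t m, hm⟩
  · rintro ⟨htm, -⟩
    exact ⟨htm.trans hmr, (pow_dvd_pow_of_dvd htm s).trans hmj⟩

lemma ggcd_eq_pow_of_filter_eq_divisors {s r j m : ℕ} (hs : s ≠ 0) (hr : r ≠ 0)
    (hm : {e ∈ r.divisors | e ^ s ∣ j} = m.divisors) : ggcd s j (r ^ s) = m ^ s := by
  have hmem : ∀ l, l ∣ r ∧ l ^ s ∣ j ↔ l ∣ m ∧ m ≠ 0 := fun l => by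
    simpa [hr] using Finset.ext_iff.1 hm l
  have hm0 : m ≠ 0 := ((hmem 1).1 ⟨one_dvd r, by simp⟩).2
  refine IsGreatest.csSup_eq ⟨?_, ?_⟩
  · obtain ⟨hmr, hmj⟩ := (hmem m).2 ⟨dvd_rfl, hm0⟩
    exact ⟨⟨m, rfl⟩, hmj, pow_dvd_pow_of_dvd hmr s⟩
  · rintro _ ⟨⟨l, rfl⟩, hlj, hlr⟩
    have hlm := ((hmem l).1 ⟨(Nat.pow_dvd_pow_iff hs).1 hlr, hlj⟩).1
    exact Nat.pow_le_pow_left (Nat.le_of_dvd (Nat.pos_of_ne_zero hm0) hlm) s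

lemma sum_moebius_filter_pow_dvd {R : Type*} [Ring R] {s r : ℕ} (hs : s ≠ 0) (hr : r ≠ 0)
    (j : ℕ) :
    ∑ e ∈ r.divisors with e ^ s ∣ j, (μ e : R) = if ggcd s j (r ^ s) = 1 then 1 else 0 := by
  obtain ⟨m, hm⟩ := exists_filter_pow_dvd_eq_divisors hr s j
  simp only [hm, ggcd_eq_pow_of_filter_eq_divisors hs hr hm, pow_eq_one_iff_left hs]
  have h := coe_mul_zeta_apply (f := (μ : ArithmeticFunction R)) (x := m)
  rw [coe_moebius_mul_coe_zeta, one_apply] at h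
  simpa only [intCoe_apply] using h.symm

lemma sum_Icc_pow_of_pow_eq_one {K : Type*} [Field K] [DecidableEq K] {x : K} {N : ℕ}
    (hx : x ^ N = 1) :
    ∑ j ∈ Icc 1 N, x ^ j = if x = 1 then (N : K) else 0 := by
  split_ifs with h
  · simp [h]
  · rw [← Ico_add_one_right_eq_Icc, geom_sum_Ico h (by omega), pow_succ, hx, one_mul, pow_one,
      sub_self, zero_div]

lemma sum_Icc_exp_eq_ite {N : ℕ} (hN : N ≠ 0) (n : ℕ) :
    ∑ j ∈ Icc 1 N, Complex.exp (2 * Real.pi * Complex.I * n * j / N) =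
      if N ∣ n then (N : ℂ) else 0 := by
  set ζ := Complex.exp (2 * Real.pi * Complex.I / N)
  have hζ : IsPrimitiveRoot ζ N := Complex.isPrimitiveRoot_exp N hN
  have hterm : ∀ j : ℕ, Complex.exp (2 * Real.pi * Complex.I * n * j / N) = (ζ ^ n) ^ j :=
    fun j => by
      rw [← pow_mul, ← Complex.exp_nat_mul]
      push_cast
      ring_nf
  rw [sum_congr rfl fun j _ => hterm j,
    sum_Icc_pow_of_pow_eq_one (by rw [← pow_mul, mul_comm, pow_mul, hζ.pow_eq_one, one_pow])]
  simp only [hζ.pow_eq_one_iff_dvd]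

lemma sum_Icc_filter_dvd {M : Type*} [AddCommMonoid M] (f : ℕ → M) {a : ℕ} (ha : a ≠ 0)
    (b : ℕ) :
    ∑ j ∈ Icc 1 (a * b) with a ∣ j, f j = ∑ m ∈ Icc 1 b, f (a * m) := by
  have : {j ∈ Icc 1 (a * b) | a ∣ j} = (Icc 1 b).image (a * ·) := by
    ext j
    simp only [mem_filter, mem_Icc, mem_image]
    constructor
    · rintro ⟨⟨hj1, hjb⟩, m, rfl⟩
      have hm : m ≠ 0 := right_ne_zero_of_mul (Nat.one_le_iff_ne_zero.1 hj1)
      exact ⟨m, ⟨Nat.one_le_iff_ne_zero.2 hm,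
        Nat.le_of_mul_le_mul_left hjb (Nat.pos_of_ne_zero ha)⟩, rfl⟩
    · rintro ⟨m, ⟨hm1, hmb⟩, rfl⟩
      exact ⟨⟨Nat.one_le_iff_ne_zero.2 (mul_ne_zero ha (by omega)),
        Nat.mul_le_mul_left a hmb⟩,
        dvd_mul_right a m⟩
  rw [this, sum_image fun x _ y _ h => Nat.eq_of_mul_eq_mul_left (Nat.pos_of_ne_zero ha) h]

lemma sum_Icc_filter_dvd_exp {a b : ℕ} (ha : a ≠ 0) (hb : b ≠ 0) (n : ℕ) :
    ∑ j ∈ Icc 1 (a * b) with a ∣ j,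
        Complex.exp (2 * Real.pi * Complex.I * n * j / (a * b : ℕ)) =
      if b ∣ n then (b : ℂ) else 0 := by
  rw [sum_Icc_filter_dvd _ ha, ← sum_Icc_exp_eq_ite hb]
  refine sum_congr rfl fun m _ => congrArg Complex.exp ?_
  have : (a : ℂ) ≠ 0 := Nat.cast_ne_zero.2 ha
  push_cast
  field_simp

theorem crs_eq_sum_divisors {s r : ℕ} (hs : s ≠ 0) (hr : r ≠ 0) (n : ℕ) :
    crs s r n =
      ∑ d ∈ r.divisors, (μ (r / d) : ℂ) * if d ^ s ∣ n then (d : ℂ) ^ s else 0 := by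
  have hinner : ∀ e ∈ r.divisors, ∑ j ∈ Icc 1 (r ^ s) with e ^ s ∣ j,
      Complex.exp (2 * Real.pi * Complex.I * n * j / (r : ℂ) ^ s) =
        if (r / e) ^ s ∣ n then ((r / e : ℕ) : ℂ) ^ s else 0 := fun e he => by
    obtain ⟨k, rfl⟩ := Nat.dvd_of_mem_divisors he
    obtain ⟨he0, hk0⟩ := mul_ne_zero_iff.1 hr
    have := sum_Icc_filter_dvd_exp (pow_ne_zero s he0) (pow_ne_zero s hk0) n
    rw [Nat.mul_div_cancel_left k (Nat.pos_of_ne_zero he0)]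
    rwa [← mul_pow, Nat.cast_pow, Nat.cast_pow] at this
  calc crs s r n
      = ∑ j ∈ Icc 1 (r ^ s), ∑ e ∈ r.divisors with e ^ s ∣ j,
          (μ e : ℂ) * Complex.exp (2 * Real.pi * Complex.I * n * j / (r : ℂ) ^ s) := by
        refine sum_congr rfl fun j _ => ?_
        rw [← sum_mul, sum_moebius_filter_pow_dvd hs hr, ite_mul, one_mul, zero_mul]
    _ = ∑ e ∈ r.divisors, (μ e : ℂ) * ∑ j ∈ Icc 1 (r ^ s) with e ^ s ∣ j,
          Complex.exp (2 * Real.pi * Complex.I * n * j / (r : ℂ) ^ s) := by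
        simp only [mul_sum, sum_filter, mul_ite, mul_zero]
        exact sum_comm
    _ = ∑ e ∈ r.divisors,
          (μ e : ℂ) * if (r / e) ^ s ∣ n then ((r / e : ℕ) : ℂ) ^ s else 0 :=
        sum_congr rfl fun e he => by rw [hinner e he]
    _ = _ := by
        rw [← Nat.sum_div_divisors r
          fun d => (μ (r / d) : ℂ) * if d ^ s ∣ n then (d : ℂ) ^ s else 0]
        exact sum_congr rfl fun d hd => by rw [Nat.div_div_self (Nat.dvd_of_mem_divisors hd) hr]

theorem sum_divisors_crs {s : ℕ} (hs : s ≠ 0) (n : ℕ) {m : ℕ} (hm : m ≠ 0) :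
    ∑ d ∈ m.divisors, crs s d n = if m ^ s ∣ n then (m : ℂ) ^ s else 0 := by
  refine (sum_eq_iff_sum_mul_moebius_eq (f := fun d => crs s d n)
    (g := fun m => if m ^ s ∣ n then (m : ℂ) ^ s else 0)).2 (fun r hr => ?_) m
    (Nat.pos_of_ne_zero hm)
  rw [crs_eq_sum_divisors hs hr.ne', Nat.sum_divisorsAntidiagonal'
    (fun x y => (μ x : ℂ) * if y ^ s ∣ n then (y : ℂ) ^ s else 0)]

lemma crs_pow_eq_sum_divisors {s r : ℕ} (hs : s ≠ 0) (hr : r ≠ 0) (k : ℕ) :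
    crs s r (k ^ s) = ∑ e ∈ r.divisors with e ∣ k, (μ (r / e) : ℂ) * (e : ℂ) ^ s := by
  simp only [crs_eq_sum_divisors hs hr, sum_filter, Nat.pow_dvd_pow_iff hs, mul_ite, mul_zero]

lemma Nat.divisors_filter_dvd_div {r e : ℕ} (hr : r ≠ 0) (he : e ∣ r) :
    {d ∈ r.divisors | e ∣ r / d} = (r / e).divisors := by
  obtain ⟨k, rfl⟩ := he
  obtain ⟨he0, hk0⟩ := mul_ne_zero_iff.1 hr
  ext d
  simp only [mem_filter, Nat.mem_divisors, Nat.mul_div_cancel_left k (Nat.pos_of_ne_zero he0)]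
  constructor
  · rintro ⟨⟨hd, -⟩, hed⟩
    rw [Nat.dvd_div_iff_mul_dvd hd, mul_comm] at hed
    exact ⟨(Nat.mul_dvd_mul_iff_left (Nat.pos_of_ne_zero he0)).1 hed, hk0⟩
  · rintro ⟨hdk, -⟩
    refine ⟨⟨hdk.mul_left e, hr⟩, (Nat.dvd_div_iff_mul_dvd (hdk.mul_left e)).2 ?_⟩
    rw [mul_comm]
    exact mul_dvd_mul_left e hdk

theorem stmt7_general (s r n : ℕ) (hs : 0 < s) (hr : 0 < r) :
    ∑ d ∈ r.divisors, crs s d n * crs s r ((r / d) ^ s) =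
      if ggcd s n (r ^ s) = 1 then (r : ℂ) ^ s else 0 := by
  calc ∑ d ∈ r.divisors, crs s d n * crs s r ((r / d) ^ s)
      = ∑ e ∈ r.divisors, ∑ d ∈ r.divisors with e ∣ r / d,
          crs s d n * ((μ (r / e) : ℂ) * (e : ℂ) ^ s) := by
        simp only [crs_pow_eq_sum_divisors hs.ne' hr.ne', mul_sum]
        exact sum_comm' fun d e => by simp only [mem_filter]; tauto
    _ = ∑ e ∈ r.divisors, (r : ℂ) ^ s * if (r / e) ^ s ∣ n then (μ (r / e) : ℂ) else 0 :=
        sum_congr rfl fun e he => by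
          have her := Nat.dvd_of_mem_divisors he
          have hr_eq : ((r / e : ℕ) : ℂ) ^ s * (e : ℂ) ^ s = (r : ℂ) ^ s := by
            rw [← mul_pow, ← Nat.cast_mul, Nat.div_mul_cancel her]
          rw [← sum_mul, Nat.divisors_filter_dvd_div hr.ne' her,
            sum_divisors_crs hs.ne' n (ne_zero_of_dvd_ne_zero hr.ne' (Nat.div_dvd_of_dvd her))]
          split_ifs
          · rw [← hr_eq]
            ring
          · simp
    _ = (r : ℂ) ^ s * ∑ t ∈ r.divisors with t ^ s ∣ n, (μ t : ℂ) := by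
        rw [← mul_sum, Nat.sum_div_divisors r fun t => if t ^ s ∣ n then (μ t : ℂ) else 0,
          sum_filter]
    _ = _ := by rw [sum_moebius_filter_pow_dvd hs.ne' hr.ne', mul_ite, mul_one, mul_zero]

theorem stmt7 (s r n : ℕ) (hs : 0 < s) (hr : 0 < r) (hn : 0 < n) :
    ∑ d ∈ r.divisors, crs s d n * crs s r ((r / d) ^ s) =
      if ggcd s n (r ^ s) = 1 then (r : ℂ) ^ s else 0 :=
  stmt7_general s r n hs hr
end

section
/- If f and g are (r,s)-even functions, then their Cauchy convolution (f ⊗ g)(n) = Σ_{k mod r^s} f(k) g(n−k) is also (r,s)-even. -/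
/-! Write `N = r^s`. An `(r,s)`-even function is a linear combination of the indicators of
`d^s ∣ n` for `d ∣ r`: by downward induction on `d`, the indicator of the class `(n, N)_s = d^s`
is the indicator of `d^s ∣ n` minus those of the classes of the proper multiples of `d`.
The convolution is bilinear, so it suffices to convolve two such indicators, of `A = a^s` and
`B = b^s`. At `n` this counts the `k mod N` with `A ∣ k` and `B ∣ n - k`: the count vanishes
unless `gcd(A, B) ∣ n`, and otherwise equals the count at `0`, by translating `k` by `A u`
where `n = A u + B v`. Since `gcd(A, B) = gcd(a, b)^s` with `gcd(a, b) ∣ r`, whether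
`gcd(A, B) ∣ n` depends only on `(n, N)_s`. -/

open Finset

open Function Submodule

def cauchyConv (N : ℕ) (f g : ℕ → ℂ) (n : ℕ) : ℂ :=
  ∑ k ∈ Icc 1 N, f k * g (n + N - k)

def dvdIndicator (m : ℕ) (n : ℕ) : ℂ := if m ∣ n then 1 else 0

lemma periodic_dvdIndicator {m N : ℕ} (h : m ∣ N) : Periodic (dvdIndicator m) N := fun n => by
  simp only [dvdIndicator, Nat.dvd_add_left h]

lemma sum_Icc_one_eq_sum_zmod_val {M : Type*} [AddCommMonoid M] (N : ℕ) [NeZero N]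
    (φ : ℕ → M) (h : φ N = φ 0) : ∑ k ∈ Icc 1 N, φ k = ∑ x : ZMod N, φ x.val := by
  obtain ⟨N, rfl⟩ := Nat.exists_eq_succ_of_ne_zero (NeZero.ne N)
  have hshift : ∑ k ∈ Icc 1 (N + 1), φ k = ∑ k ∈ range (N + 1), φ k := by
    rw [← Finset.Ico_add_one_right_eq_Icc, Finset.sum_Ico_eq_sum_range, add_tsub_cancel_right,
      Finset.sum_range_succ, Finset.sum_range_succ' φ, ← h]
    simp only [add_comm 1]
  rw [hshift, ← Fin.sum_univ_eq_sum_range]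
  rfl

lemma cauchyConv_eq_sum_zmod {N : ℕ} [NeZero N] {f g : ℕ → ℂ} (hf : Periodic f N)
    (hg : Periodic g N) (n : ℕ) :
    cauchyConv N f g n = ∑ x : ZMod N, f x.val * g ((n : ZMod N) - x).val := by
  rw [cauchyConv, sum_Icc_one_eq_sum_zmod_val N _ (by simp [hf.eq, hg n])]
  refine Fintype.sum_congr _ _ fun x => ?_
  rw [← hg.map_mod_nat, ← ZMod.val_natCast, Nat.cast_sub (by linarith [x.val_le]),
    Nat.cast_add, ZMod.natCast_self, add_zero, ZMod.natCast_zmod_val]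

lemma dvd_val_iff_castHom_eq_zero {N A : ℕ} [NeZero N] (h : A ∣ N) (x : ZMod N) :
    A ∣ x.val ↔ ZMod.castHom h (ZMod A) x = 0 := by
  rw [ZMod.castHom_apply, ZMod.cast_eq_val, ZMod.natCast_eq_zero_iff]

lemma castHom_eq_zero_of_dvd {N A G : ℕ} (hA : A ∣ N) (hG : G ∣ A) {x : ZMod N}
    (hx : ZMod.castHom hA (ZMod A) x = 0) : ZMod.castHom (hG.trans hA) (ZMod G) x = 0 := by
  rw [← ZMod.castHom_comp hG hA, RingHom.comp_apply, hx, map_zero]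

lemma cauchyConv_dvdIndicator {N A B : ℕ} [NeZero N] (hA : A ∣ N) (hB : B ∣ N) (n : ℕ) :
    cauchyConv N (dvdIndicator A) (dvdIndicator B) n =
      if Nat.gcd A B ∣ n then cauchyConv N (dvdIndicator A) (dvdIndicator B) 0 else 0 := by
  simp only [cauchyConv_eq_sum_zmod (periodic_dvdIndicator hA) (periodic_dvdIndicator hB),
    dvdIndicator, dvd_val_iff_castHom_eq_zero hA, dvd_val_iff_castHom_eq_zero hB]
  split_ifs with hn
  · obtain ⟨u, v, hbezout⟩ : ∃ u v : ZMod N, (n : ZMod N) = A * u + B * v := by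
      obtain ⟨t, rfl⟩ := hn
      refine ⟨(A.gcdA B * t : ℤ), (A.gcdB B * t : ℤ), ?_⟩
      have := congrArg (fun z : ℤ => (z * t : ZMod N)) (Nat.gcd_eq_gcd_ab A B)
      push_cast at this ⊢
      linear_combination this
    refine Fintype.sum_equiv (Equiv.subRight (A * u)) _ _ fun x => ?_
    have hA' : ZMod.castHom hA (ZMod A) (x - A * u) = ZMod.castHom hA (ZMod A) x := by
      simp only [map_sub, map_mul, map_natCast, ZMod.natCast_self, zero_mul, sub_zero]
    have hB' : ZMod.castHom hB (ZMod B) ((0 : ℕ) - (x - A * u)) =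
        ZMod.castHom hB (ZMod B) (n - x) := by
      rw [hbezout]
      simp only [map_sub, map_add, map_mul, map_natCast, ZMod.natCast_self, Nat.cast_zero, map_zero]
      ring
    rw [Equiv.subRight_apply, hA', hB']
  · refine Finset.sum_eq_zero fun x _ => ?_
    rw [ite_zero_mul_ite_zero, if_neg]
    rintro ⟨hx, hnx⟩
    refine hn ?_
    have hGN := (Nat.gcd_dvd_left A B).trans hA
    rw [← ZMod.natCast_eq_zero_iff, ← map_natCast (ZMod.castHom hGN (ZMod (A.gcd B))),
      ← add_sub_cancel x (n : ZMod N), map_add,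
      castHom_eq_zero_of_dvd hA (Nat.gcd_dvd_left A B) hx,
      castHom_eq_zero_of_dvd hB (Nat.gcd_dvd_right A B) hnx, add_zero]

section ggcd

variable {s r : ℕ}

lemma bddAbove_ggcd_set (hr : 0 < r) (n : ℕ) :
    BddAbove {m : ℕ | (∃ l : ℕ, m = l ^ s) ∧ m ∣ n ∧ m ∣ r ^ s} :=
  ⟨r ^ s, fun _ hm => Nat.le_of_dvd (pow_pos hr s) hm.2.2⟩

lemma le_ggcd (hr : 0 < r) {n l : ℕ} (hn : l ^ s ∣ n) (hl : l ^ s ∣ r ^ s) :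
    l ^ s ≤ ggcd s n (r ^ s) :=
  le_csSup (bddAbove_ggcd_set hr n) ⟨⟨l, rfl⟩, hn, hl⟩

lemma exists_ggcd_eq_pow (hs : 0 < s) (hr : 0 < r) (n : ℕ) :
    ∃ l, l ∣ r ∧ l ^ s ∣ n ∧ ggcd s n (r ^ s) = l ^ s := by
  obtain ⟨⟨l, hl⟩, hn, hr'⟩ : ggcd s n (r ^ s) ∈ {m : ℕ | (∃ l : ℕ, m = l ^ s) ∧ m ∣ n ∧ m ∣ r ^ s} :=
    Nat.sSup_mem ⟨1, ⟨1, (one_pow s).symm⟩, one_dvd n, one_dvd _⟩ (bddAbove_ggcd_set hr n)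
  rw [hl] at hn hr'
  exact ⟨l, (Nat.pow_dvd_pow_iff hs.ne').mp hr', hn, hl⟩

lemma pow_dvd_ggcd_iff (hs : 0 < s) (hr : 0 < r) {d n : ℕ} (hd : d ∣ r) :
    d ^ s ∣ ggcd s n (r ^ s) ↔ d ^ s ∣ n := by
  obtain ⟨l, hl, hln, hg⟩ := exists_ggcd_eq_pow hs hr n
  rw [hg]
  refine ⟨fun h => h.trans hln, fun h => ?_⟩
  have hlcm : (d.lcm l) ^ s ≤ l ^ s := by
    rw [← hg]
    refine le_ggcd hr ?_ ?_ <;> rw [← Nat.pow_lcm_pow]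
    · exact Nat.lcm_dvd h hln
    · exact Nat.lcm_dvd (pow_dvd_pow_of_dvd hd s) (pow_dvd_pow_of_dvd hl s)
  have hl0 : 0 < l := Nat.pos_of_dvd_of_pos hl hr
  have : d.lcm l = l := le_antisymm ((Nat.pow_le_pow_iff_left hs.ne').mp hlcm)
    (Nat.le_of_dvd (Nat.lcm_pos (Nat.pos_of_dvd_of_pos hd hr) hl0) (Nat.dvd_lcm_right d l))
  exact pow_dvd_pow_of_dvd (this ▸ Nat.dvd_lcm_left d l) s

end ggcd

def rsEvenSubmodule (s r : ℕ) : Submodule ℂ (ℕ → ℂ) where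
  carrier := {f | IsRSEven s r f}
  add_mem' hf hg n := by simp only [Pi.add_apply, hf n, hg n]
  zero_mem' _ := rfl
  smul_mem' c f hf n := by simp only [Pi.smul_apply, hf n]

def cauchyConvBilin (N : ℕ) : (ℕ → ℂ) →ₗ[ℂ] (ℕ → ℂ) →ₗ[ℂ] (ℕ → ℂ) :=
  LinearMap.mk₂ ℂ (cauchyConv N)
    (fun f f' g => funext fun n => by simp [cauchyConv, add_mul, sum_add_distrib])
    (fun c f g => funext fun n => by simp [cauchyConv, mul_sum, mul_assoc])
    (fun f g g' => funext fun n => by simp [cauchyConv, mul_add, sum_add_distrib])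
    (fun c f g => funext fun n => by simp [cauchyConv, mul_sum, mul_left_comm])

def powDvdIndicators (s r : ℕ) : Set (ℕ → ℂ) := (fun d => dvdIndicator (d ^ s)) '' {d | d ∣ r}

noncomputable def ggcdIndicator (s r d : ℕ) (n : ℕ) : ℂ := if ggcd s n (r ^ s) = d ^ s then 1 else 0

section span

variable {s r : ℕ}

lemma dvdIndicator_pow_eq_sum (hs : 0 < s) (hr : 0 < r) {d : ℕ} (hd : d ∣ r) :
    dvdIndicator (d ^ s) = ∑ e ∈ r.divisors with d ∣ e, ggcdIndicator s r e := by
  funext n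
  obtain ⟨l, hl, -, hg⟩ := exists_ggcd_eq_pow hs hr n
  have hdl : d ^ s ∣ n ↔ d ∣ l := by
    rw [← pow_dvd_ggcd_iff hs hr hd, hg, Nat.pow_dvd_pow_iff hs.ne']
  simp only [dvdIndicator, hdl, Finset.sum_apply, ggcdIndicator, hg,
    (Nat.pow_left_injective hs.ne').eq_iff]
  simp [hl, hr.ne']

lemma ggcdIndicator_mem_span (hs : 0 < s) (hr : 0 < r) {d : ℕ} (hd : d ∣ r) :
    ggcdIndicator s r d ∈ span ℂ (powDvdIndicators s r) := by
  induction h : r - d using Nat.strong_induction_on generalizing d with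
  | _ k ih =>
    have hmem : d ∈ {e ∈ r.divisors | d ∣ e} := by simp [hd, hr.ne']
    have hsplit : ggcdIndicator s r d = dvdIndicator (d ^ s) -
        ∑ e ∈ {e ∈ r.divisors | d ∣ e}.erase d, ggcdIndicator s r e := by
      rw [dvdIndicator_pow_eq_sum hs hr hd, ← add_sum_erase _ _ hmem, add_sub_cancel_right]
    rw [hsplit]
    refine sub_mem (subset_span ⟨d, hd, rfl⟩) (sum_mem fun e he => ?_)
    obtain ⟨hed, he⟩ := mem_erase.mp he
    obtain ⟨her, hde⟩ := mem_filter.mp he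
    have := Nat.le_of_dvd hr (Nat.dvd_of_mem_divisors her)
    have := Nat.le_of_dvd (Nat.pos_of_mem_divisors her) hde
    exact ih (r - e) (by omega) (Nat.dvd_of_mem_divisors her) rfl

lemma mem_span_powDvdIndicators (hs : 0 < s) (hr : 0 < r) {f : ℕ → ℂ} (hf : IsRSEven s r f) :
    f ∈ span ℂ (powDvdIndicators s r) := by
  have hsum : f = ∑ d ∈ r.divisors, f (d ^ s) • ggcdIndicator s r d := by
    funext n
    obtain ⟨l, hl, -, hg⟩ := exists_ggcd_eq_pow hs hr n
    simp only [Finset.sum_apply, Pi.smul_apply, ggcdIndicator, hg,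
      (Nat.pow_left_injective hs.ne').eq_iff, smul_eq_mul, mul_ite, mul_one, mul_zero]
    simp [hl, hr.ne', hf n, hg]
  rw [hsum]
  exact sum_mem fun d hd => smul_mem _ _ (ggcdIndicator_mem_span hs hr (Nat.dvd_of_mem_divisors hd))

lemma image2_cauchyConv_powDvdIndicators_subset (hs : 0 < s) (hr : 0 < r) :
    Set.image2 (cauchyConv (r ^ s)) (powDvdIndicators s r) (powDvdIndicators s r) ⊆
      rsEvenSubmodule s r := by
  rintro _ ⟨_, ⟨a, ha, rfl⟩, _, ⟨b, hb, rfl⟩, rfl⟩ n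
  have : NeZero (r ^ s) := ⟨(pow_pos hr s).ne'⟩
  have hA : a ^ s ∣ r ^ s := pow_dvd_pow_of_dvd ha s
  have hB : b ^ s ∣ r ^ s := pow_dvd_pow_of_dvd hb s
  dsimp only
  rw [cauchyConv_dvdIndicator hA hB n, cauchyConv_dvdIndicator hA hB (ggcd s n _), Nat.pow_gcd_pow]
  simp only [pow_dvd_ggcd_iff hs hr ((Nat.gcd_dvd_left a b).trans ha)]

end span

theorem stmt10 (s r : ℕ) (hs : 0 < s) (hr : 0 < r) (f g : ℕ → ℂ)
    (hf : IsRSEven s r f) (hg : IsRSEven s r g) :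
    IsRSEven s r (fun n => ∑ k ∈ Finset.Icc 1 (r ^ s), f k * g (n + r ^ s - k)) := by
  have hfg := apply_mem_map₂ (cauchyConvBilin (r ^ s)) (mem_span_powDvdIndicators hs hr hf)
    (mem_span_powDvdIndicators hs hr hg)
  rw [map₂_span_span] at hfg
  exact span_le.mpr (image2_cauchyConv_powDvdIndicators_subset hs hr) hfg
end

section
/- If f is an (r,s)-even function, then Σ_{n=1}^{r^s} |f̂(n)|² = r^s Σ_{d | r} |f(d^s)|² J_s(r^s/d^s), where J_s is the Jordan totient function and f̂ is the DFT over period r^s. -/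
open Finset

/-- `J_s(l^s)` as a count: the number of `n` with `1 ≤ n ≤ m` and `(n,m)_s = 1`. -/
noncomputable def jcount (s m : ℕ) : ℕ :=
  Nat.card {n : ℕ // 1 ≤ n ∧ n ≤ m ∧ ggcd s n m = 1}

/-!
Both sides equal `r^s ∑_{k=1}^{r^s} |f(k)|²`. On the left this is Parseval's identity for the
DFT, which rests on the orthogonality `∑_{n=1}^{N} ζ^{cn} = N·[N ∣ c]` of an `N`-th root of unity.
On the right, split `1 ≤ k ≤ r^s` according to the value `d^s = (k, r^s)_s`, on which `f` is
constant; since `(c^s a, c^s b)_s = c^s (a, b)_s`, the map `n ↦ d^s n` is a bijection from the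
`n ≤ r^s/d^s` with `(n, r^s/d^s)_s = 1` onto that fibre, which therefore has `J_s(r^s/d^s)`
elements.
-/

open Complex ComplexConjugate Real

theorem IsPrimitiveRoot.sum_Icc_zpow_pow {K : Type*} [Field K] {ζ : K} {N : ℕ}
    (hζ : IsPrimitiveRoot ζ N) (c : ℤ) :
    ∑ n ∈ Icc 1 N, (ζ ^ c) ^ n = if (N : ℤ) ∣ c then (N : K) else 0 := by
  set w := ζ ^ c
  have hwN : w ^ N = 1 := by
    rw [← zpow_natCast, ← zpow_mul, mul_comm, zpow_mul, zpow_natCast, hζ.pow_eq_one, one_zpow]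
  have hsum : ∑ n ∈ Icc 1 N, w ^ n = w * ∑ n ∈ range N, w ^ n := by
    rw [mul_sum, range_eq_Ico]
    simp_rw [← pow_succ']
    rw [Finset.sum_Ico_add' (fun n => w ^ n), zero_add, Finset.Ico_add_one_right_eq_Icc]
  split_ifs with hc
  · simp [w, (hζ.zpow_eq_one_iff_dvd c).mpr hc]
  · have hw : w ≠ 1 := fun h => hc ((hζ.zpow_eq_one_iff_dvd c).mp h)
    rw [hsum, geom_sum_eq hw, hwN, sub_self, zero_div, mul_zero]

lemma exp_neg_mul_conj_exp_neg (N k j n : ℕ) :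
    exp (-(2 * π * I * k * n / N)) * conj (exp (-(2 * π * I * j * n / N))) =
      (exp (2 * π * I / N) ^ ((j : ℤ) - k)) ^ n := by
  rw [← exp_conj, ← Complex.exp_add, ← zpow_natCast, ← zpow_mul, ← exp_int_mul]
  congr 1
  simp only [map_neg, map_div₀, map_mul, conj_I, conj_ofReal, map_ofNat, map_natCast]
  push_cast
  ring

lemma intCast_dvd_sub_iff_eq {N j k : ℕ} (hj : j ∈ Icc 1 N) (hk : k ∈ Icc 1 N) :
    (N : ℤ) ∣ (j : ℤ) - k ↔ j = k := by
  refine ⟨fun h => ?_, fun h => by simp [h]⟩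
  rw [mem_Icc] at hj hk
  have := Int.eq_zero_of_abs_lt_dvd h (abs_sub_lt_iff.mpr ⟨by omega, by omega⟩)
  omega

theorem sum_norm_sq_dft_eq (N : ℕ) (hN : N ≠ 0) (f : ℕ → ℂ) :
    ∑ n ∈ Icc 1 N, ‖∑ k ∈ Icc 1 N, f k * exp (-(2 * π * I * k * n / N))‖ ^ 2 =
      N * ∑ k ∈ Icc 1 N, ‖f k‖ ^ 2 := by
  have hζ := isPrimitiveRoot_exp N hN
  apply ofReal_injective
  push_cast
  simp_rw [← mul_conj', map_sum, map_mul, sum_mul_sum]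
  calc ∑ n ∈ Icc 1 N, ∑ k ∈ Icc 1 N, ∑ j ∈ Icc 1 N,
        f k * exp (-(2 * π * I * k * n / N)) * (conj (f j) * conj (exp (-(2 * π * I * j * n / N))))
      = ∑ k ∈ Icc 1 N, ∑ j ∈ Icc 1 N, f k * conj (f j) *
          ∑ n ∈ Icc 1 N, (exp (2 * π * I / N) ^ ((j : ℤ) - k)) ^ n := by
        rw [sum_comm]
        refine sum_congr rfl fun k _ => ?_
        rw [sum_comm]
        refine sum_congr rfl fun j _ => ?_
        rw [mul_sum]
        refine sum_congr rfl fun n _ => ?_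
        rw [← exp_neg_mul_conj_exp_neg]
        ring
    _ = ∑ k ∈ Icc 1 N, f k * conj (f k) * N := by
        refine sum_congr rfl fun k hk => ?_
        rw [sum_eq_single_of_mem k hk fun j hj hjk => ?_, hζ.sum_Icc_zpow_pow, sub_self,
          if_pos (dvd_zero _)]
        rw [hζ.sum_Icc_zpow_pow, if_neg ((intCast_dvd_sub_iff_eq hj hk).not.mpr hjk), mul_zero]
    _ = N * ∑ k ∈ Icc 1 N, f k * conj (f k) := by
        rw [← sum_mul, mul_comm]

section ggcd

variable {s a b c : ℕ}

lemma bddAbove_pow_dvd_dvd (hb : b ≠ 0) :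
    BddAbove {m : ℕ | (∃ l : ℕ, m = l ^ s) ∧ m ∣ a ∧ m ∣ b} :=
  ⟨b, fun _ hm => Nat.le_of_dvd (Nat.pos_of_ne_zero hb) hm.2.2⟩

lemma ggcd_mem (hb : b ≠ 0) : (∃ l, ggcd s a b = l ^ s) ∧ ggcd s a b ∣ a ∧ ggcd s a b ∣ b :=
  Nat.sSup_mem (s := {m : ℕ | (∃ l : ℕ, m = l ^ s) ∧ m ∣ a ∧ m ∣ b})
    ⟨1, ⟨1, (one_pow s).symm⟩, one_dvd a, one_dvd b⟩ (bddAbove_pow_dvd_dvd hb)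

lemma pow_dvd_ggcd (hb : b ≠ 0) (hca : c ^ s ∣ a) (hcb : c ^ s ∣ b) : c ^ s ∣ ggcd s a b := by
  obtain ⟨⟨l, hl⟩, hla, hlb⟩ := ggcd_mem (s := s) (a := a) hb
  rw [hl] at hla hlb ⊢
  have hLa : Nat.lcm c l ^ s ∣ a := Nat.pow_lcm_pow ▸ Nat.lcm_dvd hca hla
  have hLb : Nat.lcm c l ^ s ∣ b := Nat.pow_lcm_pow ▸ Nat.lcm_dvd hcb hlb
  -- `(lcm c l)^s` is itself a common `s`-th power divisor, so it cannot exceed `l^s`.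
  have hL : Nat.lcm c l ^ s = l ^ s := by
    refine le_antisymm (hl ▸ le_csSup (bddAbove_pow_dvd_dvd hb) ⟨⟨_, rfl⟩, hLa, hLb⟩) ?_
    exact Nat.le_of_dvd (Nat.pos_of_dvd_of_pos hLb (Nat.pos_of_ne_zero hb))
      (pow_dvd_pow_of_dvd (Nat.dvd_lcm_right c l) s)
  exact hL ▸ pow_dvd_pow_of_dvd (Nat.dvd_lcm_left c l) s

lemma ggcd_pow_mul_pow_mul (hs : s ≠ 0) (hc : c ≠ 0) (hb : b ≠ 0) :
    ggcd s (c ^ s * a) (c ^ s * b) = c ^ s * ggcd s a b := by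
  have hcb : c ^ s * b ≠ 0 := mul_ne_zero (pow_ne_zero s hc) hb
  obtain ⟨⟨l, hl⟩, hla, hlb⟩ := ggcd_mem (s := s) (a := a) hb
  obtain ⟨⟨e, he⟩, hea, heb⟩ := ggcd_mem (s := s) (a := c ^ s * a) hcb
  have hce : c ∣ e := (Nat.pow_dvd_pow_iff hs).mp <|
    he ▸ pow_dvd_ggcd hcb (dvd_mul_right _ a) (dvd_mul_right _ b)
  obtain ⟨t, rfl⟩ := hce
  have hcs : 0 < c ^ s := Nat.pos_of_ne_zero (pow_ne_zero s hc)
  rw [mul_pow] at he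
  rw [he] at hea heb
  have hta : t ^ s ∣ ggcd s a b :=
    pow_dvd_ggcd hb (Nat.dvd_of_mul_dvd_mul_left hcs hea) (Nat.dvd_of_mul_dvd_mul_left hcs heb)
  refine Nat.dvd_antisymm (he ▸ Nat.mul_dvd_mul_left _ hta) ?_
  rw [hl, ← mul_pow]
  exact pow_dvd_ggcd hcb (mul_pow c l s ▸ Nat.mul_dvd_mul_left _ (hl ▸ hla))
    (mul_pow c l s ▸ Nat.mul_dvd_mul_left _ (hl ▸ hlb))

lemma jcount_eq_card (s m : ℕ) : jcount s m = #{n ∈ Icc 1 m | ggcd s n m = 1} := by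
  rw [jcount, ← Nat.card_eq_finsetCard]
  exact Nat.card_congr (Equiv.subtypeEquivRight (by simp [and_assoc]))

lemma card_filter_ggcd_eq_pow {N : ℕ} (hs : s ≠ 0) (hN : N ≠ 0) (hcN : c ^ s ∣ N) :
    #{k ∈ Icc 1 N | ggcd s k N = c ^ s} = jcount s (N / c ^ s) := by
  obtain ⟨m, rfl⟩ := hcN
  have hc : c ≠ 0 := by rintro rfl; simp [zero_pow hs] at hN
  have hm : m ≠ 0 := right_ne_zero_of_mul hN
  have hcs : 0 < c ^ s := Nat.pos_of_ne_zero (pow_ne_zero s hc)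
  rw [Nat.mul_div_cancel_left m hcs, jcount_eq_card]
  symm
  apply card_nbij (c ^ s * ·)
  · intro n hn
    simp only [coe_filter, mem_Icc, Set.mem_ofPred_eq] at hn ⊢
    obtain ⟨⟨hn1, hnm⟩, hgcd⟩ := hn
    rw [ggcd_pow_mul_pow_mul hs hc hm, hgcd, mul_one]
    exact ⟨⟨Nat.one_le_iff_ne_zero.mpr (mul_ne_zero hcs.ne' (by omega)),
      Nat.mul_le_mul_left _ hnm⟩, rfl⟩
  · exact (mul_right_injective₀ hcs.ne').injOn
  · intro k hk
    simp only [coe_filter, mem_Icc, Set.mem_ofPred_eq] at hk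
    obtain ⟨⟨hk1, hkN⟩, hgcd⟩ := hk
    obtain ⟨n, rfl⟩ : c ^ s ∣ k := hgcd ▸ (ggcd_mem (mul_ne_zero hcs.ne' hm)).2.1
    rw [ggcd_pow_mul_pow_mul hs hc hm, mul_eq_left₀ hcs.ne'] at hgcd
    refine ⟨n, ?_, rfl⟩
    simp only [coe_filter, mem_Icc, Set.mem_ofPred_eq]
    exact ⟨⟨Nat.pos_of_ne_zero (right_ne_zero_of_mul (Nat.one_le_iff_ne_zero.mp hk1)),
      Nat.le_of_mul_le_mul_left hkN hcs⟩, hgcd⟩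

end ggcd

theorem IsRSEven.sum_Icc_eq_sum_divisors {M : Type*} [AddCommMonoid M] {s r : ℕ} {f : ℕ → ℂ}
    (hf : IsRSEven s r f) (hs : s ≠ 0) (hr : r ≠ 0) (g : ℂ → M) :
    ∑ k ∈ Icc 1 (r ^ s), g (f k) = ∑ d ∈ r.divisors, jcount s (r ^ s / d ^ s) • g (f (d ^ s)) := by
  have hN : r ^ s ≠ 0 := pow_ne_zero s hr
  have hmaps : ∀ k ∈ Icc 1 (r ^ s), ggcd s k (r ^ s) ∈ r.divisors.image (· ^ s) := by
    intro k _
    obtain ⟨⟨l, hl⟩, -, hlr⟩ := ggcd_mem (s := s) (a := k) hN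
    exact mem_image.mpr ⟨l, Nat.mem_divisors.mpr ⟨(Nat.pow_dvd_pow_iff hs).mp (hl ▸ hlr), hr⟩,
      hl.symm⟩
  rw [← sum_fiberwise_of_maps_to hmaps, sum_image fun d _ d' _ => (Nat.pow_left_inj hs).mp]
  refine sum_congr rfl fun d hd => ?_
  rw [← card_filter_ggcd_eq_pow hs hN (pow_dvd_pow_of_dvd (Nat.dvd_of_mem_divisors hd) s),
    ← sum_const]
  exact sum_congr rfl fun k hk => by rw [hf k, (mem_filter.mp hk).2]

theorem stmt13 (s r : ℕ) (hs : 0 < s) (hr : 0 < r) (f : ℕ → ℂ)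
    (hf : IsRSEven s r f) :
    ∑ n ∈ Finset.Icc 1 (r ^ s), ‖dft s r f n‖ ^ 2 =
      (r : ℝ) ^ s * ∑ d ∈ r.divisors,
        ‖f (d ^ s)‖ ^ 2 * (jcount s (r ^ s / d ^ s) : ℝ) := by
  calc ∑ n ∈ Icc 1 (r ^ s), ‖dft s r f n‖ ^ 2
      = (r : ℝ) ^ s * ∑ k ∈ Icc 1 (r ^ s), ‖f k‖ ^ 2 := by
        simpa [dft] using sum_norm_sq_dft_eq (r ^ s) (pow_ne_zero s hr.ne') f
    _ = _ := by
        rw [hf.sum_Icc_eq_sum_divisors hs.ne' hr.ne' (‖·‖ ^ 2)]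
        simp only [nsmul_eq_mul, mul_comm]
end
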